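/- Let P be a program over 𝒰, A, B ⊆ 𝒰, and let Q (a program over 𝒰 ∖ A) be an A-simplification of P relative to B. Then SE^B_A(P) = SE^{Ā, B ∖ A}(Q). -/
import Mathlib


/-- An extended rule over a type of atoms: head, positive body, negative body,
double-negated body. -/
structure ASPRule (Atom : Type) where
  head : Finset Atom
  pos : Finset Atom
  neg : Finset Atom
  nneg : Finset Atom
deriving DecidableEq

/-- A program is a finite set of rules. -/
abbrev ASPProgram (Atom : Type) [DecidableEq Atom] := Finset (ASPRule Atom)

section Defs

variable {Atom : Type} [DecidableEq Atom] [Fintype Atom]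

/-- A rule is over `S` if all its atoms lie in `S`. -/
def ruleOver (r : ASPRule Atom) (S : Finset Atom) : Prop :=
  r.head ⊆ S ∧ r.pos ⊆ S ∧ r.neg ⊆ S ∧ r.nneg ⊆ S

/-- A program is over `S` if all its rules are over `S`. -/
def progOver (P : ASPProgram Atom) (S : Finset Atom) : Prop :=
  ∀ r ∈ P, ruleOver r S

/-- `I` satisfies (is a model of) rule `r`. -/
def satRule (I : Finset Atom) (r : ASPRule Atom) : Prop :=
  ((r.head ∪ r.neg) ∩ I).Nonempty ∨ ¬ (r.pos ∪ r.nneg ⊆ I)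

/-- `I` is a model of program `P`. -/
def sat (I : Finset Atom) (P : ASPProgram Atom) : Prop :=
  ∀ r ∈ P, satRule I r

/-- The GL-reduct `P^I`. -/
def reduct (P : ASPProgram Atom) (I : Finset Atom) : ASPProgram Atom :=
  (P.filter (fun r => r.neg ∩ I = ∅ ∧ r.nneg ⊆ I)).image
    (fun r => ⟨r.head, r.pos, ∅, ∅⟩)

/-- The answer sets of `P`: minimal models of the reduct. -/
def AS (P : ASPProgram Atom) : Set (Finset Atom) :=
  {I | sat I (reduct P I) ∧ ∀ J ⊂ I, ¬ sat J (reduct P I)}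

/-- Projection of a program onto `𝒰 ∖ A`: rules with a head or negative-body atom
from `A` are dropped; in the remaining rules the atoms of `A` are removed from the
positive and double-negated bodies. -/
def projAway (P : ASPProgram Atom) (A : Finset Atom) : ASPProgram Atom :=
  (P.filter (fun r => r.neg ∩ A = ∅ ∧ r.head ∩ A = ∅)).image
    (fun r => ⟨r.head, r.pos \ A, r.neg, r.nneg \ A⟩)

/-- `R` is `A`-separated: a union of a program over `𝒰 ∖ A` and a program over `A`. -/
def ASeparated (R : ASPProgram Atom) (A : Finset Atom) : Prop :=
  ∃ R₁ R₂ : ASPProgram Atom, R = R₁ ∪ R₂ ∧ progOver R₁ Aᶜ ∧ progOver R₂ A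

/-- The defining equation of a (strong) `A`-simplification of `P` relative to `B`:
`AS(P ∪ R)_{|Ā} = AS(Q ∪ R_{|Ā})` for every `A`-separated program `R` over `B`. -/
def SimpEq (P : ASPProgram Atom) (A B : Finset Atom) (Q : ASPProgram Atom) : Prop :=
  ∀ R : ASPProgram Atom, progOver R B → ASeparated R A →
    (fun I => I \ A) '' AS (P ∪ R) = AS (Q ∪ projAway R A)

/-- The SE-models of `P`. -/
def SE (P : ASPProgram Atom) : Set (Finset Atom × Finset Atom) :=
  {p | p.1 ⊆ p.2 ∧ sat p.2 P ∧ sat p.1 (reduct P p.2)}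

/-- The (relativized) `B`-SE-models of `P`. -/
def SEB (B : Finset Atom) (P : ASPProgram Atom) : Set (Finset Atom × Finset Atom) :=
  {p | (p.1 = p.2 ∨ p.1 ⊂ p.2 ∩ B) ∧ sat p.2 P ∧
    (∀ Y' ⊂ p.2, Y' ∩ B = p.2 ∩ B → ¬ sat Y' (reduct P p.2)) ∧
    (p.1 ⊂ p.2 → ∃ X' ⊆ p.2, X' ∩ B = p.1 ∧ sat X' (reduct P p.2))}

/-- `SE^{A₁,A₂}(P)`: the `A₂`-SE-models `⟨X,Y⟩` of `P` with `Y ⊆ A₁`. -/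
def SERel (P : ASPProgram Atom) (A₁ A₂ : Finset Atom) : Set (Finset Atom × Finset Atom) :=
  {p | p ∈ SEB A₂ P ∧ p.2 ⊆ A₁}

/-- `P` satisfies `Δʳ` for `A`, `B`. -/
def DeltaR (P : ASPProgram Atom) (A B : Finset Atom) : Prop :=
  (∀ Y : Finset Atom, (Y, Y) ∈ SEB B P → A ∩ B ⊆ Y) ∧
  (∀ X Y : Finset Atom, (X, Y) ∈ SE P → (Y, Y) ∈ SEB B P → X \ A = Y \ A → X = Y) ∧
  (∀ X Y : Finset Atom, (X, Y) ∈ SEB B P → (X ∪ (Y ∩ A ∩ B), Y) ∈ SEB B P)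

/-- The family `𝓡^Y_{⟨P,A,B⟩}`. -/
def RFam (P : ASPProgram Atom) (A B Y : Finset Atom) : Set (Set (Finset Atom)) :=
  {S | ∃ A' ⊆ A, (Y ∪ A', Y ∪ A') ∈ SEB B P ∧
    S = {Z | ∃ X : Finset Atom, (X, Y ∪ A') ∈ SEB B P ∧ Z = X \ A}}

/-- `P` satisfies criterion `Ω_{A,B}`: for some `Y ⊆ 𝒰 ∖ A` the family
`𝓡^Y_{⟨P,A,B⟩}` is non-empty and has no `⊆`-least element. -/
def OmegaCrit (P : ASPProgram Atom) (A B : Finset Atom) : Prop :=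
  ∃ Y : Finset Atom, Y ⊆ Aᶜ ∧ (RFam P A B Y).Nonempty ∧
    ¬ ∃ S ∈ RFam P A B Y, ∀ T ∈ RFam P A B Y, S ⊆ T

/-- `⋂ 𝓡^Y_{⟨P,A,B⟩}`, taken to be `∅` when the family is empty. -/
def RInter (P : ASPProgram Atom) (A B Y : Finset Atom) : Set (Finset Atom) :=
  {X | (RFam P A B Y).Nonempty ∧ ∀ S ∈ RFam P A B Y, X ∈ S}

/-- The `A`-`B`-SE-models `SE^B_A(P)` of `P`. -/
def SEBA (P : ASPProgram Atom) (A B : Finset Atom) : Set (Finset Atom × Finset Atom) :=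
  {p | ∃ Y : Finset Atom, (Y, Y) ∈ SEB B P ∧ p = (Y \ A, Y \ A)} ∪
  {p | ∃ X Y : Finset Atom, (X, Y) ∈ SEB B P ∧ X ⊂ Y ∧
    (∀ Y' : Finset Atom, (Y', Y') ∈ SEB B P → Y' \ A = Y \ A →
      ∃ X' : Finset Atom, (X', Y') ∈ SEB B P ∧ X' \ A = X \ A) ∧
    p = (X \ A, Y \ A)}

end Defs

section Helpers
set_option linter.unusedSectionVars false

variable {Atom : Type} [DecidableEq Atom] [Fintype Atom]

/-- Program consisting of facts `b ←` for `b ∈ S`. -/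
def factsP (S : Finset Atom) : ASPProgram Atom :=
  S.image fun b => ⟨{b}, ∅, ∅, ∅⟩

/-- Program consisting of all rules `p ← q` for `p, q ∈ C`. -/
def chainsP (C : Finset Atom) : ASPProgram Atom :=
  (C ×ˢ C).image fun pq => ⟨{pq.1}, {pq.2}, ∅, ∅⟩

lemma sat_union {I : Finset Atom} {P R : ASPProgram Atom} :
    sat I (P ∪ R) ↔ sat I P ∧ sat I R := by
  simp [sat, Finset.mem_union, or_imp, forall_and]

lemma reduct_union (P R : ASPProgram Atom) (I : Finset Atom) :
    reduct (P ∪ R) I = reduct P I ∪ reduct R I := by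
  simp [reduct, Finset.filter_union, Finset.image_union]

lemma sat_facts {J S : Finset Atom} : sat J (factsP S) ↔ S ⊆ J := by
  constructor
  · intro h b hb
    have := h ⟨{b}, ∅, ∅, ∅⟩ (Finset.mem_image.2 ⟨b, hb, rfl⟩)
    rcases this with h1 | h2
    · rcases h1 with ⟨x, hx⟩
      simp only [Finset.union_empty, Finset.mem_inter, Finset.mem_singleton] at hx
      rcases hx with ⟨rfl, hxJ⟩
      exact hxJ
    · exact absurd (by simp) h2
  · intro h r hr
    rcases Finset.mem_image.1 hr with ⟨b, hb, rfl⟩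
    left
    exact ⟨b, by simp [h hb]⟩

lemma sat_chains {J C : Finset Atom} :
    sat J (chainsP C) ↔ ∀ p ∈ C, ∀ q ∈ C, q ∈ J → p ∈ J := by
  constructor
  · intro h p hp q hq hqJ
    have := h ⟨{p}, {q}, ∅, ∅⟩
      (Finset.mem_image.2 ⟨(p, q), Finset.mem_product.2 ⟨hp, hq⟩, rfl⟩)
    rcases this with h1 | h2
    · rcases h1 with ⟨x, hx⟩
      simp only [Finset.union_empty, Finset.mem_inter, Finset.mem_singleton] at hx
      rcases hx with ⟨rfl, hxJ⟩
      exact hxJ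
    · exact absurd (by simpa using hqJ) h2
  · intro h r hr
    rcases Finset.mem_image.1 hr with ⟨⟨p, q⟩, hpq, rfl⟩
    rcases Finset.mem_product.1 hpq with ⟨hp, hq⟩
    by_cases hqJ : q ∈ J
    · left; exact ⟨p, by simp [h p hp q hq hqJ]⟩
    · right; simpa using hqJ

lemma reduct_facts (S I : Finset Atom) : reduct (factsP S) I = factsP S := by
  unfold reduct factsP
  rw [Finset.filter_true_of_mem, Finset.image_image]
  · rfl
  · intro r hr
    rcases Finset.mem_image.1 hr with ⟨b, _, rfl⟩
    simp

lemma reduct_chains (C I : Finset Atom) : reduct (chainsP C) I = chainsP C := by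
  unfold reduct chainsP
  rw [Finset.filter_true_of_mem, Finset.image_image]
  · rfl
  · intro r hr
    rcases Finset.mem_image.1 hr with ⟨pq, _, rfl⟩
    simp

lemma projAway_facts (S A : Finset Atom) :
    projAway (factsP S) A = factsP (S \ A) := by
  ext r
  simp only [projAway, factsP, Finset.mem_image, Finset.mem_filter, Finset.mem_sdiff]
  constructor
  · rintro ⟨r', ⟨hr', hneg, hhead⟩, rfl⟩
    rcases hr' with ⟨b, hb, rfl⟩
    have hbA : b ∉ A := by
      intro hbA
      rw [Finset.singleton_inter_of_mem hbA] at hhead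
      simp at hhead
    exact ⟨b, ⟨hb, hbA⟩, by simp⟩
  · rintro ⟨b, ⟨hb, hbA⟩, rfl⟩
    exact ⟨⟨{b}, ∅, ∅, ∅⟩, ⟨⟨b, hb, rfl⟩, by simp,
      Finset.singleton_inter_of_notMem hbA⟩, by simp⟩

lemma projAway_chains {C A : Finset Atom} (hC : ∀ c ∈ C, c ∉ A) :
    projAway (chainsP C) A = chainsP C := by
  ext r
  simp only [projAway, chainsP, Finset.mem_image, Finset.mem_filter]
  constructor
  · rintro ⟨r', ⟨hr', hneg, hhead⟩, rfl⟩
    rcases hr' with ⟨⟨p, q⟩, hpq, rfl⟩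
    rcases Finset.mem_product.1 hpq with ⟨hp, hq⟩
    refine ⟨(p, q), hpq, ?_⟩
    have hqA : q ∉ A := hC q hq
    have : ({q} : Finset Atom) \ A = {q} :=
      Finset.sdiff_eq_self_of_disjoint (Finset.disjoint_singleton_left.2 hqA)
    simp [this]
  · rintro ⟨⟨p, q⟩, hpq, rfl⟩
    rcases Finset.mem_product.1 hpq with ⟨hp, hq⟩
    refine ⟨⟨{p}, {q}, ∅, ∅⟩, ⟨⟨(p, q), hpq, rfl⟩, by simp,
      Finset.singleton_inter_of_notMem (hC p hp)⟩, ?_⟩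
    have hqA : q ∉ A := hC q hq
    have : ({q} : Finset Atom) \ A = {q} :=
      Finset.sdiff_eq_self_of_disjoint (Finset.disjoint_singleton_left.2 hqA)
    simp [this]

lemma projAway_union (P R : ASPProgram Atom) (A : Finset Atom) :
    projAway (P ∪ R) A = projAway P A ∪ projAway R A := by
  simp [projAway, Finset.filter_union, Finset.image_union]

lemma progOver_facts {S T : Finset Atom} (h : S ⊆ T) : progOver (factsP S) T := by
  intro r hr
  rcases Finset.mem_image.1 hr with ⟨b, hb, rfl⟩
  exact ⟨Finset.singleton_subset_iff.2 (h hb), by simp, by simp, by simp⟩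

lemma progOver_chains {C T : Finset Atom} (h : C ⊆ T) : progOver (chainsP C) T := by
  intro r hr
  rcases Finset.mem_image.1 hr with ⟨⟨p, q⟩, hpq, rfl⟩
  rcases Finset.mem_product.1 hpq with ⟨hp, hq⟩
  exact ⟨Finset.singleton_subset_iff.2 (h hp),
    Finset.singleton_subset_iff.2 (h hq), by simp, by simp⟩

lemma progOver_union {P R : ASPProgram Atom} {T : Finset Atom}
    (h1 : progOver P T) (h2 : progOver R T) : progOver (P ∪ R) T := by
  intro r hr
  rcases Finset.mem_union.1 hr with h | h
  · exact h1 r h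
  · exact h2 r h

lemma progOver_empty (T : Finset Atom) : progOver (∅ : ASPProgram Atom) T := by
  intro r hr; simp at hr

lemma sat_reduct_self {I : Finset Atom} {P : ASPProgram Atom} :
    sat I (reduct P I) ↔ sat I P := by
  constructor
  · intro h r hr
    by_cases hneg : r.neg ∩ I = ∅
    · by_cases hnneg : r.nneg ⊆ I
      · have hmem : (⟨r.head, r.pos, ∅, ∅⟩ : ASPRule Atom) ∈ reduct P I :=
          Finset.mem_image.2 ⟨r, Finset.mem_filter.2 ⟨hr, hneg, hnneg⟩, rfl⟩
        rcases h _ hmem with h1 | h2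
        · left
          rcases h1 with ⟨x, hx⟩
          simp only [Finset.mem_inter, Finset.mem_union] at hx
          rcases hx.1 with hx1 | hx1
          · exact ⟨x, Finset.mem_inter.2 ⟨Finset.mem_union.2 (Or.inl hx1), hx.2⟩⟩
          · simp at hx1
        · right
          intro hsub
          exact h2 (by
            intro x hx
            rcases Finset.mem_union.1 hx with hx1 | hx1
            · exact hsub (Finset.mem_union.2 (Or.inl hx1))
            · simp at hx1)
      · right
        intro hsub
        exact hnneg fun x hx => hsub (Finset.mem_union.2 (Or.inr hx))
    · left
      rcases Finset.nonempty_iff_ne_empty.2 hneg with ⟨x, hx⟩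
      rcases Finset.mem_inter.1 hx with ⟨hx1, hx2⟩
      exact ⟨x, Finset.mem_inter.2 ⟨Finset.mem_union.2 (Or.inr hx1), hx2⟩⟩
  · intro h r' hr'
    rcases Finset.mem_image.1 hr' with ⟨r, hrf, rfl⟩
    rcases Finset.mem_filter.1 hrf with ⟨hr, hneg, hnneg⟩
    rcases h r hr with h1 | h2
    · left
      rcases h1 with ⟨x, hx⟩
      rcases Finset.mem_inter.1 hx with ⟨hx1, hx2⟩
      rcases Finset.mem_union.1 hx1 with hx1 | hx1
      · exact ⟨x, Finset.mem_inter.2 ⟨Finset.mem_union.2 (Or.inl hx1), hx2⟩⟩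
      · exact absurd (Finset.mem_inter.2 ⟨hx1, hx2⟩) (by simp [hneg])
    · right
      intro hsub
      refine h2 ?_
      intro x hx
      rcases Finset.mem_union.1 hx with hx1 | hx1
      · exact hsub (Finset.mem_union.2 (Or.inl hx1))
      · exact hnneg hx1

lemma mem_AS {I : Finset Atom} {P : ASPProgram Atom} :
    I ∈ AS P ↔ sat I (reduct P I) ∧ ∀ J ⊂ I, ¬ sat J (reduct P I) := Iff.rfl

/-- Answer sets of `P ∪ R` for a reduct-stable context `R`. -/
lemma mem_AS_union {I : Finset Atom} {P R : ASPProgram Atom}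
    (hR : ∀ J : Finset Atom, reduct R J = R) :
    I ∈ AS (P ∪ R) ↔ sat I P ∧ sat I R ∧
      ∀ J ⊂ I, ¬ (sat J (reduct P I) ∧ sat J R) := by
  rw [mem_AS, reduct_union, hR]
  constructor
  · rintro ⟨h1, h2⟩
    rcases sat_union.1 h1 with ⟨h1a, h1b⟩
    exact ⟨sat_reduct_self.1 h1a, h1b, fun J hJ hc => h2 J hJ (sat_union.2 hc)⟩
  · rintro ⟨h1, h2, h3⟩
    exact ⟨sat_union.2 ⟨sat_reduct_self.2 h1, h2⟩,
      fun J hJ hc => h3 J hJ ⟨(sat_union.1 hc).1, (sat_union.1 hc).2⟩⟩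

lemma mem_SEB {B X Y : Finset Atom} {P : ASPProgram Atom} :
    (X, Y) ∈ SEB B P ↔ (X = Y ∨ X ⊂ Y ∩ B) ∧ sat Y P ∧
      (∀ Y' ⊂ Y, Y' ∩ B = Y ∩ B → ¬ sat Y' (reduct P Y)) ∧
      (X ⊂ Y → ∃ X' ⊆ Y, X' ∩ B = X ∧ sat X' (reduct P Y)) := Iff.rfl

lemma chains_dichotomy {J C : Finset Atom}
    (h : ∀ p ∈ C, ∀ q ∈ C, q ∈ J → p ∈ J) : J ∩ C = ∅ ∨ C ⊆ J := by
  by_cases hne : (J ∩ C).Nonempty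
  · rcases hne with ⟨q, hq⟩
    rcases Finset.mem_inter.1 hq with ⟨hqJ, hqC⟩
    exact Or.inr fun p hp => h p hp q hqC hqJ
  · exact Or.inl (Finset.not_nonempty_iff_eq_empty.1 hne)

end Helpers

section Main
set_option linter.unusedSectionVars false

variable {Atom : Type} [DecidableEq Atom] [Fintype Atom]

lemma sdiff_inter_sdiff (Y B A : Finset Atom) : (Y \ A) ∩ (B \ A) = (Y ∩ B) \ A := by
  ext x
  simp only [Finset.mem_inter, Finset.mem_sdiff]
  tauto

lemma sdiff_eq_self_of_subset_sdiff {S B A : Finset Atom} (h : S ⊆ B \ A) :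
    S \ A = S := by
  apply Finset.sdiff_eq_self_of_disjoint
  rw [Finset.disjoint_left]
  intro x hx hxA
  exact (Finset.mem_sdiff.1 (h hx)).2 hxA

lemma subset_compl_of_subset_sdiff {S B A : Finset Atom} (h : S ⊆ B \ A) :
    S ⊆ Aᶜ := fun x hx => Finset.mem_compl.2 (Finset.mem_sdiff.1 (h hx)).2

lemma sdiff_subset_compl (Y A : Finset Atom) : Y \ A ⊆ Aᶜ :=
  fun x hx => Finset.mem_compl.2 (Finset.mem_sdiff.1 hx).2

lemma factsP_union (S T : Finset Atom) :
    factsP (S ∪ T) = factsP S ∪ factsP T := Finset.image_union _ _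

lemma asep_facts (S A : Finset Atom) : ASeparated (factsP S) A := by
  refine ⟨factsP (S \ A), factsP (S ∩ A), ?_, ?_, ?_⟩
  · rw [← factsP_union, Finset.sdiff_union_inter]
  · exact progOver_facts (sdiff_subset_compl S A)
  · exact progOver_facts Finset.inter_subset_right

lemma total_iff {P : ASPProgram Atom} {B Y : Finset Atom} :
    (Y, Y) ∈ SEB B P ↔ Y ∈ AS (P ∪ factsP (Y ∩ B)) := by
  rw [mem_AS_union (fun J => reduct_facts _ J), mem_SEB]
  constructor
  · rintro ⟨-, hsatY, hmin, -⟩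
    refine ⟨hsatY, sat_facts.2 Finset.inter_subset_left, ?_⟩
    rintro J hJ ⟨hsatJ, hfJ⟩
    have hsub : Y ∩ B ⊆ J := sat_facts.1 hfJ
    have heq : J ∩ B = Y ∩ B :=
      Finset.Subset.antisymm (Finset.inter_subset_inter hJ.subset (Finset.Subset.refl B))
        (Finset.subset_inter hsub Finset.inter_subset_right)
    exact hmin J hJ heq hsatJ
  · rintro ⟨hsatY, _, hmin⟩
    refine ⟨Or.inl rfl, hsatY, ?_, fun h => absurd rfl h.ne⟩
    intro Y' hY' heq hsat
    exact hmin Y' hY' ⟨hsat, sat_facts.2 (by rw [← heq]; exact Finset.inter_subset_left)⟩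

lemma SEB_total_of {P : ASPProgram Atom} {B X Y : Finset Atom} (h : (X, Y) ∈ SEB B P) :
    (Y, Y) ∈ SEB B P := by
  obtain ⟨_, h1, h2, _⟩ := mem_SEB.1 h
  exact mem_SEB.2 ⟨Or.inl rfl, h1, h2, fun hc => absurd rfl hc.ne⟩

lemma lem_a {P Q : ASPProgram Atom} {A B : Finset Atom} (hsimp : SimpEq P A B Q)
    {Y : Finset Atom} (h : (Y, Y) ∈ SEB B P) : (Y \ A, Y \ A) ∈ SEB (B \ A) Q := by
  have h1 : Y ∈ AS (P ∪ factsP (Y ∩ B)) := total_iff.1 h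
  have himg := hsimp (factsP (Y ∩ B)) (progOver_facts Finset.inter_subset_right) (asep_facts _ _)
  have h2 : Y \ A ∈ AS (Q ∪ projAway (factsP (Y ∩ B)) A) := by
    rw [← himg]
    exact ⟨Y, h1, rfl⟩
  rw [projAway_facts, show (Y ∩ B) \ A = (Y \ A) ∩ (B \ A) from (sdiff_inter_sdiff Y B A).symm] at h2
  exact total_iff.2 h2

lemma lem_b {P Q : ASPProgram Atom} {A B : Finset Atom} (hsimp : SimpEq P A B Q)
    {Yb : Finset Atom} (h : (Yb, Yb) ∈ SEB (B \ A) Q) :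
    ∃ Y₀, (Y₀, Y₀) ∈ SEB B P ∧ Y₀ \ A = Yb := by
  have h1 : Yb ∈ AS (Q ∪ factsP (Yb ∩ (B \ A))) := total_iff.1 h
  have hSB : Yb ∩ (B \ A) ⊆ B := Finset.inter_subset_right.trans Finset.sdiff_subset
  have himg := hsimp (factsP (Yb ∩ (B \ A))) (progOver_facts hSB) (asep_facts _ _)
  rw [projAway_facts, sdiff_eq_self_of_subset_sdiff
    (Finset.inter_subset_right : Yb ∩ (B \ A) ⊆ B \ A)] at himg
  rw [← himg] at h1
  rcases h1 with ⟨Y₀, hY₀, hproj⟩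
  refine ⟨Y₀, ?_, hproj⟩
  rcases (mem_AS_union (fun J => reduct_facts _ J)).1 hY₀ with ⟨hsatP, _, hmin⟩
  rw [mem_SEB]
  refine ⟨Or.inl rfl, hsatP, ?_, fun hc => absurd rfl hc.ne⟩
  intro Y' hY' heq hsat
  apply hmin Y' hY'
  refine ⟨hsat, sat_facts.2 ?_⟩
  intro x hx
  have hxB : x ∈ B := hSB hx
  have hxY₀ : x ∈ Y₀ := by
    have := (Finset.mem_inter.1 hx).1
    rw [← hproj] at this
    exact (Finset.mem_sdiff.1 this).1
  have : x ∈ Y' ∩ B := heq ▸ Finset.mem_inter.2 ⟨hxY₀, hxB⟩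
  exact (Finset.mem_inter.1 this).1

end Main

section Main2
set_option linter.unusedSectionVars false
set_option maxHeartbeats 1000000

variable {Atom : Type} [DecidableEq Atom] [Fintype Atom]

lemma lem_claim {P Q : ASPProgram Atom} {A B : Finset Atom} (hsimp : SimpEq P A B Q)
    {Xb Yb : Finset Atom} (hXY : (Xb, Yb) ∈ SEB (B \ A) Q)
    (hss : Xb ⊂ Yb ∩ (B \ A)) :
    ∀ Y', (Y', Y') ∈ SEB B P → Y' \ A = Yb →
      ∃ X', (X', Y') ∈ SEB B P ∧ X' \ A = Xb := by
  intro Y' hY' hproj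
  by_contra hno
  push_neg at hno
  have hXC : Xb ⊆ Yb ∩ (B \ A) := hss.subset
  have hXne : Xb ≠ Yb ∩ (B \ A) := hss.ne
  have hXB' : Xb ⊆ B \ A := hXC.trans Finset.inter_subset_right
  have hYbY' : Yb ⊆ Y' := hproj ▸ Finset.sdiff_subset
  have hYB : (Y' ∩ B) \ A = Yb ∩ (B \ A) := by
    rw [← sdiff_inter_sdiff, hproj]
  obtain ⟨hstr', hsatY', hminY', -⟩ := mem_SEB.1 hY'
  -- key: no Z ⊆ Y' with (Z ∩ B) \ A = Xb satisfies the reduct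
  have key : ∀ Z ⊆ Y', (Z ∩ B) \ A = Xb → ¬ sat Z (reduct P Y') := by
    intro Z hZ hZB hsat
    have hX'sub : Z ∩ B ⊆ Y' ∩ B :=
      Finset.inter_subset_inter hZ (Finset.Subset.refl B)
    have hX'ne : Z ∩ B ≠ Y' ∩ B := by
      intro he
      apply hXne
      rw [← hZB, he, hYB]
    have hmem : (Z ∩ B, Y') ∈ SEB B P := by
      rw [mem_SEB]
      refine ⟨Or.inr (lt_of_le_of_ne hX'sub hX'ne), hsatY', hminY', ?_⟩
      intro _
      exact ⟨Z, hZ, rfl, hsat⟩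
    exact hno (Z ∩ B) hmem hZB
  -- the gadget program
  set Cb := Yb ∩ (B \ A) with hCb
  have hCbA : ∀ c ∈ Cb, c ∉ A := fun c hc =>
    (Finset.mem_sdiff.1 (Finset.mem_inter.1 hc).2).2
  have hCbB : Cb ⊆ B := Finset.inter_subset_right.trans Finset.sdiff_subset
  have hCbYb : Cb ⊆ Yb := Finset.inter_subset_left
  set R1 : ASPProgram Atom := factsP Xb ∪ chainsP (Cb \ Xb) with hR1
  set R2 : ASPProgram Atom := factsP (Y' ∩ B ∩ A) with hR2
  have hstable : ∀ J : Finset Atom, reduct (R1 ∪ R2) J = R1 ∪ R2 := by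
    intro J
    rw [reduct_union, reduct_union, reduct_facts, reduct_chains, reduct_facts]
  have hover : progOver (R1 ∪ R2) B :=
    progOver_union
      (progOver_union (progOver_facts (hXB'.trans Finset.sdiff_subset))
        (progOver_chains (Finset.sdiff_subset.trans hCbB)))
      (progOver_facts (Finset.inter_subset_left.trans Finset.inter_subset_right))
  have hsep : ASeparated (R1 ∪ R2) A :=
    ⟨R1, R2, rfl,
      progOver_union (progOver_facts (subset_compl_of_subset_sdiff hXB'))
        (progOver_chains (subset_compl_of_subset_sdiff (Finset.sdiff_subset.trans
          (Finset.inter_subset_right : Cb ⊆ B \ A)))),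
      progOver_facts Finset.inter_subset_right⟩
  have hXbY' : Xb ⊆ Y' := (hXC.trans hCbYb).trans hYbY'
  have hY'AS : Y' ∈ AS (P ∪ (R1 ∪ R2)) := by
    rw [mem_AS_union hstable]
    refine ⟨hsatY', ?_, ?_⟩
    · rw [sat_union, sat_union]
      refine ⟨⟨sat_facts.2 hXbY', ?_⟩, sat_facts.2 (Finset.inter_subset_left.trans Finset.inter_subset_left)⟩
      rw [sat_chains]
      intro p hp q hq hqJ
      exact hYbY' (hCbYb (Finset.mem_sdiff.1 hp).1)
    · rintro J hJ ⟨hsatJ, hsatR⟩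
      rw [sat_union, sat_union] at hsatR
      obtain ⟨⟨hf1, hch⟩, hf2⟩ := hsatR
      have hXbJ : Xb ⊆ J := sat_facts.1 hf1
      have hAJ : Y' ∩ B ∩ A ⊆ J := sat_facts.1 hf2
      rcases chains_dichotomy (sat_chains.1 hch) with hemp | hfull
      · apply key J hJ.subset ?_ hsatJ
        apply Finset.Subset.antisymm
        · intro x hx
          obtain ⟨hxJB, hxA⟩ := Finset.mem_sdiff.1 hx
          obtain ⟨hxJ, hxB⟩ := Finset.mem_inter.1 hxJB
          have hxCb : x ∈ Cb := by
            rw [← hYB]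
            exact Finset.mem_sdiff.2 ⟨Finset.mem_inter.2 ⟨hJ.subset hxJ, hxB⟩, hxA⟩
          by_contra hxXb
          have : x ∈ J ∩ (Cb \ Xb) :=
            Finset.mem_inter.2 ⟨hxJ, Finset.mem_sdiff.2 ⟨hxCb, hxXb⟩⟩
          rw [hemp] at this
          simp at this
        · intro x hx
          have hxB' := hXB' hx
          exact Finset.mem_sdiff.2 ⟨Finset.mem_inter.2
            ⟨hXbJ hx, (Finset.mem_sdiff.1 hxB').1⟩, (Finset.mem_sdiff.1 hxB').2⟩
      · apply hminY' J hJ ?_ hsatJ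
        apply Finset.Subset.antisymm
        · exact Finset.inter_subset_inter hJ.subset (Finset.Subset.refl B)
        · intro x hx
          obtain ⟨hxY', hxB⟩ := Finset.mem_inter.1 hx
          by_cases hxA : x ∈ A
          · exact Finset.mem_inter.2
              ⟨hAJ (Finset.mem_inter.2 ⟨hx, hxA⟩), hxB⟩
          · have hxCb : x ∈ Cb := by
              rw [← hYB]
              exact Finset.mem_sdiff.2 ⟨hx, hxA⟩
            by_cases hxXb : x ∈ Xb
            · exact Finset.mem_inter.2 ⟨hXbJ hxXb, hxB⟩
            · exact Finset.mem_inter.2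
                ⟨hfull (Finset.mem_sdiff.2 ⟨hxCb, hxXb⟩), hxB⟩
  -- project with hsimp
  have himg := hsimp (R1 ∪ R2) hover hsep
  have hprojR : projAway (R1 ∪ R2) A = R1 := by
    rw [projAway_union, hR1, projAway_union, projAway_facts,
      projAway_chains (fun c hc => hCbA c (Finset.mem_sdiff.1 hc).1),
      hR2, projAway_facts]
    rw [sdiff_eq_self_of_subset_sdiff hXB',
      Finset.sdiff_eq_empty_iff_subset.2 (Finset.inter_subset_right : Y' ∩ B ∩ A ⊆ A)]
    simp [factsP]
  rw [hprojR] at himg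
  have hYbAS : Yb ∈ AS (Q ∪ R1) := by
    rw [← himg]
    exact ⟨Y', hY'AS, hproj⟩
  obtain ⟨-, -, -, hiii⟩ := mem_SEB.1 hXY
  have hXssYb : Xb ⊂ Yb := by
    refine lt_of_le_of_ne (hXC.trans hCbYb) ?_
    intro he
    rw [he] at hss
    exact absurd (lt_of_lt_of_le hss hCbYb) (lt_irrefl _)
  obtain ⟨Zb, hZsub, hZB, hZsat⟩ := hiii hXssYb
  have hstable1 : ∀ J : Finset Atom, reduct R1 J = R1 := by
    intro J
    rw [hR1, reduct_union, reduct_facts, reduct_chains]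
  obtain ⟨-, -, hminQ⟩ := (mem_AS_union hstable1).1 hYbAS
  have hZss : Zb ⊂ Yb := by
    refine lt_of_le_of_ne hZsub ?_
    intro he
    apply hXne
    rw [← hZB, he, hCb]
  refine hminQ Zb hZss ⟨hZsat, ?_⟩
  rw [sat_union]
  constructor
  · exact sat_facts.2 (by rw [← hZB]; exact Finset.inter_subset_left)
  · rw [sat_chains]
    intro p hp q hq hqZ
    exfalso
    obtain ⟨hqC, hqX⟩ := Finset.mem_sdiff.1 hq
    have hqB' : q ∈ B \ A := (Finset.mem_inter.1 (hCb ▸ hqC)).2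
    have : q ∈ Zb ∩ (B \ A) := Finset.mem_inter.2 ⟨hqZ, hqB'⟩
    rw [hZB] at this
    exact hqX this

end Main2

section Main3
set_option linter.unusedSectionVars false
set_option maxHeartbeats 1000000

variable {Atom : Type} [DecidableEq Atom] [Fintype Atom]

lemma lem_c {P Q : ASPProgram Atom} {A B : Finset Atom} (hsimp : SimpEq P A B Q)
    {Xb Yb : Finset Atom} (hXY : (Xb, Yb) ∈ SEB (B \ A) Q)
    (hss : Xb ⊂ Yb ∩ (B \ A)) :
    ∃ X Y : Finset Atom, (X, Y) ∈ SEB B P ∧ X ⊂ Y ∧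
      (∀ Y' : Finset Atom, (Y', Y') ∈ SEB B P → Y' \ A = Y \ A →
        ∃ X' : Finset Atom, (X', Y') ∈ SEB B P ∧ X' \ A = X \ A) ∧
      ((Xb, Yb) : Finset Atom × Finset Atom) = (X \ A, Y \ A) := by
  have hXbne : Xb ≠ Yb := by
    intro he
    rw [he] at hss
    exact absurd (lt_of_lt_of_le hss Finset.inter_subset_left) (lt_irrefl _)
  obtain ⟨Y₀, htot0, hproj0⟩ := lem_b hsimp (SEB_total_of hXY)
  have hclaim := lem_claim hsimp hXY hss
  obtain ⟨X₀, hmem0, hXproj0⟩ := hclaim Y₀ htot0 hproj0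
  have hX₀ne : X₀ ≠ Y₀ := by
    intro he
    exact hXbne (by rw [← hXproj0, he, hproj0])
  have hX₀ss : X₀ ⊂ Y₀ ∩ B := by
    rcases (mem_SEB.1 hmem0).1 with he | h
    · exact absurd he hX₀ne
    · exact h
  refine ⟨X₀, Y₀, hmem0, lt_of_le_of_ne (hX₀ss.subset.trans Finset.inter_subset_left) hX₀ne,
    ?_, ?_⟩
  · intro Y'' htot'' hproj''
    obtain ⟨X'', hmem'', hXproj''⟩ := hclaim Y'' htot'' (by rw [hproj'', hproj0])
    exact ⟨X'', hmem'', by rw [hXproj'', hXproj0]⟩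
  · rw [Prod.mk.injEq]
    exact ⟨hXproj0.symm, hproj0.symm⟩

lemma lem_d {P Q : ASPProgram Atom} {A B : Finset Atom} (hsimp : SimpEq P A B Q)
    {X Y : Finset Atom} (hXY : (X, Y) ∈ SEB B P) (hss : X ⊂ Y)
    (hcoh : ∀ Y' : Finset Atom, (Y', Y') ∈ SEB B P → Y' \ A = Y \ A →
      ∃ X' : Finset Atom, (X', Y') ∈ SEB B P ∧ X' \ A = X \ A) :
    (X \ A, Y \ A) ∈ SEB (B \ A) Q := by
  have htotP : (Y, Y) ∈ SEB B P := SEB_total_of hXY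
  have htot' : (Y \ A, Y \ A) ∈ SEB (B \ A) Q := lem_a hsimp htotP
  by_cases hcase : X \ A = Y \ A
  · rw [hcase]; exact htot'
  · by_contra hnot
    have hXYB : X ⊂ Y ∩ B := by
      rcases (mem_SEB.1 hXY).1 with he | h
      · exact absurd he hss.ne
      · exact h
    have hXB : X ⊆ B := hXYB.subset.trans Finset.inter_subset_right
    have hXbB' : X \ A ⊆ B \ A := Finset.sdiff_subset_sdiff hXB (Finset.Subset.refl A)
    have hXbCb : X \ A ⊆ (Y \ A) ∩ (B \ A) := by
      rw [sdiff_inter_sdiff]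
      exact Finset.sdiff_subset_sdiff hXYB.subset (Finset.Subset.refl A)
    have hXbYb : X \ A ⊆ Y \ A := Finset.sdiff_subset_sdiff hss.subset (Finset.Subset.refl A)
    obtain ⟨-, hsatYb, hminYb, -⟩ := mem_SEB.1 htot'
    -- key2
    have key2 : ∀ J ⊂ Y \ A, J ∩ (B \ A) = X \ A → ¬ sat J (reduct Q (Y \ A)) := by
      intro J hJ hJB hsat
      by_cases hdeg : X \ A = (Y \ A) ∩ (B \ A)
      · exact hminYb J hJ (by rw [hJB, hdeg]) hsat
      · apply hnot
        rw [mem_SEB]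
        exact ⟨Or.inr (lt_of_le_of_ne hXbCb hdeg), hsatYb, hminYb,
          fun _ => ⟨J, hJ.subset, hJB, hsat⟩⟩
    -- gadget
    set Cb := (Y \ A) ∩ (B \ A) with hCb
    have hCbA : ∀ c ∈ Cb, c ∉ A := fun c hc =>
      (Finset.mem_sdiff.1 (Finset.mem_inter.1 hc).2).2
    have hCbB : Cb ⊆ B := Finset.inter_subset_right.trans Finset.sdiff_subset
    have hCbYb : Cb ⊆ Y \ A := Finset.inter_subset_left
    set G : ASPProgram Atom := factsP (X \ A) ∪ chainsP (Cb \ (X \ A)) with hG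
    have hGstable : ∀ J : Finset Atom, reduct G J = G := by
      intro J
      rw [hG, reduct_union, reduct_facts, reduct_chains]
    have hGover : progOver G B :=
      progOver_union (progOver_facts (hXbB'.trans Finset.sdiff_subset))
        (progOver_chains (Finset.sdiff_subset.trans hCbB))
    have hGsep : ASeparated G A :=
      ⟨G, ∅, (Finset.union_empty G).symm,
        progOver_union (progOver_facts (subset_compl_of_subset_sdiff hXbB'))
          (progOver_chains (subset_compl_of_subset_sdiff (Finset.sdiff_subset.trans
            (Finset.inter_subset_right : Cb ⊆ B \ A)))),
        progOver_empty A⟩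
    have hYbAS : Y \ A ∈ AS (Q ∪ G) := by
      rw [mem_AS_union hGstable]
      refine ⟨hsatYb, ?_, ?_⟩
      · rw [sat_union]
        refine ⟨sat_facts.2 hXbYb, ?_⟩
        rw [sat_chains]
        intro p hp q hq hqJ
        exact hCbYb (Finset.mem_sdiff.1 hp).1
      · rintro J hJ ⟨hsatJ, hsatG⟩
        rw [sat_union] at hsatG
        obtain ⟨hf1, hch⟩ := hsatG
        have hXbJ : X \ A ⊆ J := sat_facts.1 hf1
        rcases chains_dichotomy (sat_chains.1 hch) with hemp | hfull
        · apply key2 J hJ ?_ hsatJ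
          apply Finset.Subset.antisymm
          · intro x hx
            obtain ⟨hxJ, hxB'⟩ := Finset.mem_inter.1 hx
            have hxCb : x ∈ Cb := Finset.mem_inter.2 ⟨hJ.subset hxJ, hxB'⟩
            by_contra hxXb
            have : x ∈ J ∩ (Cb \ (X \ A)) :=
              Finset.mem_inter.2 ⟨hxJ, Finset.mem_sdiff.2 ⟨hxCb, hxXb⟩⟩
            rw [hemp] at this
            simp at this
          · exact Finset.subset_inter hXbJ hXbB'
        · apply hminYb J hJ ?_ hsatJ
          apply Finset.Subset.antisymm
          · exact Finset.inter_subset_inter hJ.subset (Finset.Subset.refl _)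
          · intro x hx
            have hxB' : x ∈ B \ A := (Finset.mem_inter.1 hx).2
            by_cases hxXb : x ∈ X \ A
            · exact Finset.mem_inter.2 ⟨hXbJ hxXb, hxB'⟩
            · exact Finset.mem_inter.2
                ⟨hfull (Finset.mem_sdiff.2 ⟨hx, hxXb⟩), hxB'⟩
    -- hsimp
    have himg := hsimp G hGover hGsep
    have hprojG : projAway G A = G := by
      rw [hG, projAway_union, projAway_facts,
        projAway_chains (fun c hc => hCbA c (Finset.mem_sdiff.1 hc).1),
        sdiff_eq_self_of_subset_sdiff hXbB']
    rw [hprojG] at himg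
    rw [← himg] at hYbAS
    obtain ⟨Y₀, hY₀AS, hY₀proj'⟩ := hYbAS
    have hY₀proj : Y₀ \ A = Y \ A := hY₀proj'
    obtain ⟨hsatP0, hsatG0, hmin0⟩ := (mem_AS_union hGstable).1 hY₀AS
    have hYbY₀ : Y \ A ⊆ Y₀ := by
      rw [← hY₀proj]
      exact Finset.sdiff_subset
    have htot0 : (Y₀, Y₀) ∈ SEB B P := by
      rw [mem_SEB]
      refine ⟨Or.inl rfl, hsatP0, ?_, fun hc => absurd rfl hc.ne⟩
      intro Y' hY' heq hsat
      apply hmin0 Y' hY'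
      refine ⟨hsat, ?_⟩
      rw [sat_union]
      constructor
      · apply sat_facts.2
        intro x hx
        have : x ∈ Y₀ ∩ B := Finset.mem_inter.2
          ⟨hYbY₀ (hXbYb hx), (Finset.mem_sdiff.1 (hXbB' hx)).1⟩
        rw [← heq] at this
        exact (Finset.mem_inter.1 this).1
      · rw [sat_chains]
        intro p hp q hq hqJ
        have hpCb : p ∈ Cb := (Finset.mem_sdiff.1 hp).1
        have : p ∈ Y₀ ∩ B := Finset.mem_inter.2
          ⟨hYbY₀ (hCbYb hpCb), hCbB hpCb⟩
        rw [← heq] at this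
        exact (Finset.mem_inter.1 this).1
    obtain ⟨X₀, hX₀mem, hX₀proj⟩ := hcoh Y₀ htot0 hY₀proj
    have hX₀ne : X₀ ≠ Y₀ := by
      intro he
      exact hcase (by rw [← hX₀proj, he, hY₀proj])
    have hX₀ss : X₀ ⊂ Y₀ ∩ B := by
      rcases (mem_SEB.1 hX₀mem).1 with he | h
      · exact absurd he hX₀ne
      · exact h
    obtain ⟨-, -, -, hiii0⟩ := mem_SEB.1 hX₀mem
    obtain ⟨X', hX'sub, hX'B, hX'sat⟩ :=
      hiii0 (lt_of_le_of_ne (hX₀ss.subset.trans Finset.inter_subset_left) hX₀ne)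
    have hX'ss : X' ⊂ Y₀ := by
      refine lt_of_le_of_ne hX'sub ?_
      intro he
      apply hX₀ss.ne
      rw [← hX'B, he]
    apply hmin0 X' hX'ss
    refine ⟨hX'sat, ?_⟩
    rw [sat_union]
    constructor
    · apply sat_facts.2
      intro x hx
      have hxX₀ : x ∈ X₀ := by
        rw [← hX₀proj] at hx
        exact (Finset.mem_sdiff.1 hx).1
      rw [← hX'B] at hxX₀
      exact (Finset.mem_inter.1 hxX₀).1
    · rw [sat_chains]
      intro p hp q hq hqX'
      exfalso
      obtain ⟨hqC, hqX⟩ := Finset.mem_sdiff.1 hq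
      have hqB : q ∈ B := hCbB hqC
      have hqA : q ∉ A := hCbA q hqC
      have hqX₀ : q ∈ X₀ := by
        rw [← hX'B]
        exact Finset.mem_inter.2 ⟨hqX', hqB⟩
      exact hqX (by rw [← hX₀proj]; exact Finset.mem_sdiff.2 ⟨hqX₀, hqA⟩)

end Main3

/-- if `Q` is an `A`-simplification of `P` relative to `B`, then
`SE^B_A(P) = SE^{Ā, B ∖ A}(Q)`. -/
theorem stmt3 {Atom : Type} [DecidableEq Atom] [Fintype Atom]
    (P Q : ASPProgram Atom) (A B : Finset Atom)
    (hQ : progOver Q Aᶜ) (hsimp : SimpEq P A B Q) :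
    SEBA P A B = SERel Q Aᶜ (B \ A) := by
  ext ⟨x, y⟩
  simp only [SEBA, SERel, Set.mem_union, Set.mem_setOf_eq]
  constructor
  · rintro (⟨Y, hY, hp⟩ | ⟨X, Y, hmem, hss, hcoh, hp⟩)
    · rw [Prod.mk.injEq] at hp
      obtain ⟨rfl, rfl⟩ := hp
      exact ⟨lem_a hsimp hY, sdiff_subset_compl Y A⟩
    · rw [Prod.mk.injEq] at hp
      obtain ⟨rfl, rfl⟩ := hp
      exact ⟨lem_d hsimp hmem hss hcoh, sdiff_subset_compl Y A⟩
  · rintro ⟨hmem, hsub⟩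
    rcases (mem_SEB.1 hmem).1 with rfl | hssm
    · obtain ⟨Y₀, htot, hproj⟩ := lem_b hsimp hmem
      left
      exact ⟨Y₀, htot, by rw [hproj]⟩
    · right
      exact lem_c hsimp hmem hssm
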